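/- arXiv:2007.15530 — 3 statements merged into one kernel-verified Lean document; each statement's English description precedes it below -/
import Mathlib

section
/- For a > 0, the family φ_a(t) = 2 sin(3at/2) sin(at/2)/(π a t²) satisfies ‖φ_a‖₁ ≤ 2^{3/2}·3^{-1/4}, a bound independent of a. -/
/-!
Since `φ_a(t) = a φ_1(a t)`, every `φ_a` has the same `L¹` norm as `φ_1`. Bounding each sine
factor by `min 1 |x|` gives `π |φ_1(t)| ≤ min (3/2) (min |t|⁻¹ (2 / t²))`, whose integral over `ℝ`
is `2 (2 + log 3)`; and `2 (2 + log 3) / π ≈ 1.97` is below `2^{3/2} 3^{-1/4} ≈ 2.149`.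
-/

open MeasureTheory

/-- `φ_a(t) = 2 sin(3at/2) sin(at/2)/(π a t²)`, extended continuously at `t = 0`. -/
noncomputable def phia (a t : ℝ) : ℝ :=
  if t = 0 then 3 * a / (2 * Real.pi)
  else 2 * Real.sin (3 * a * t / 2) * Real.sin (a * t / 2) / (Real.pi * a * t ^ 2)

open Set Real

theorem eLpNorm_one_comp_mul_left {E : Type*} [NormedAddCommGroup E] (f : ℝ → E) {a : ℝ}
    (ha : a ≠ 0) :
    eLpNorm (fun t => f (a * t)) 1 volume = ENNReal.ofReal |a⁻¹| * eLpNorm f 1 volume := by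
  rw [← eLpNorm_one_smul_measure, ← Real.map_volume_mul_left ha,
    (measurableEmbedding_mulLeft₀ ha).eLpNorm_map_measure]
  rfl

theorem eLpNorm_one_smul_comp_mul_left {E : Type*} [NormedAddCommGroup E] [NormedSpace ℝ E]
    (f : ℝ → E) {a : ℝ} (ha : a ≠ 0) :
    eLpNorm (fun t => a • f (a * t)) 1 volume = eLpNorm f 1 volume := by
  rw [show (fun t => a • f (a * t)) = a • fun t => f (a * t) from rfl, eLpNorm_const_smul,
    eLpNorm_one_comp_mul_left f ha, ← mul_assoc, Real.enorm_eq_ofReal_abs,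
    ← ENNReal.ofReal_mul (abs_nonneg a), ← abs_mul, mul_inv_cancel₀ ha, abs_one,
    ENNReal.ofReal_one, one_mul]

theorem phia_eq_smul_comp_mul (a : ℝ) : phia a = fun t => a • phia 1 (a * t) := by
  ext t
  rcases eq_or_ne a 0 with rfl | ha
  · simp [phia]
  rcases eq_or_ne t 0 with rfl | ht
  · simp only [phia, mul_zero, if_pos, smul_eq_mul]; ring
  simp only [phia, if_neg ht, if_neg (mul_ne_zero ha ht), smul_eq_mul]
  field_simp

/-- On `[0, ∞)` this is `min (3/2) (min u⁻¹ (2 / u²))`, written piecewise at the crossover points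
`2/3` and `2`. -/
noncomputable def phiaMajorant (u : ℝ) : ℝ :=
  if u ≤ 2 / 3 then 3 / 2 else if u ≤ 2 then u⁻¹ else 2 / u ^ 2

theorem phiaMajorant_nonneg (u : ℝ) : 0 ≤ phiaMajorant u := by
  unfold phiaMajorant
  split_ifs <;> first | positivity | exact inv_nonneg.2 (by linarith)

theorem abs_phia_one_le (t : ℝ) : |phia 1 t| ≤ phiaMajorant |t| / π := by
  rcases eq_or_ne t 0 with rfl | ht
  · rw [phia, if_pos rfl, abs_zero, phiaMajorant, if_pos (by norm_num), abs_of_pos (by positivity),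
      mul_one, div_div]
  set u := |t|
  have hu : 0 < u := abs_pos.2 ht
  set x := |sin (3 * t / 2)|
  set y := |sin (t / 2)|
  have hx₁ : x ≤ 1 := abs_sin_le_one _
  have hy₁ : y ≤ 1 := abs_sin_le_one _
  have hx : x ≤ 3 * u / 2 := abs_sin_le_abs.trans_eq (by simp [u, abs_div, abs_mul])
  have hy : y ≤ u / 2 := abs_sin_le_abs.trans_eq (by simp [u, abs_div])
  have hphi : |phia 1 t| = 2 * x * y / u ^ 2 / π := by
    simp only [phia, if_neg ht, x, y, u, abs_div, abs_mul, abs_pow, abs_two, abs_of_pos pi_pos,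
      one_mul, mul_one]
    ring
  rw [hphi]
  gcongr
  have hx₀ : 0 ≤ x := abs_nonneg _
  have hy₀ : 0 ≤ y := abs_nonneg _
  unfold phiaMajorant
  split_ifs
  · rw [div_le_iff₀ (by positivity)]; nlinarith [mul_le_mul hx hy hy₀ (by positivity)]
  · rw [div_le_iff₀ (by positivity), inv_mul_eq_div, pow_two, mul_div_cancel_right₀ _ hu.ne']
    nlinarith [mul_le_mul hx₁ hy hy₀ zero_le_one]
  · gcongr; nlinarith [mul_le_mul hx₁ hy₁ hy₀ zero_le_one]

theorem phiaMajorant_eqOn_uIcc_zero : EqOn phiaMajorant (fun _ => 3 / 2) (uIcc 0 (2 / 3)) := by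
  rw [uIcc_of_le (by norm_num)]
  exact fun u hu => if_pos hu.2

theorem phiaMajorant_eqOn_uIcc_two_thirds : EqOn phiaMajorant (·⁻¹) (uIcc (2 / 3) 2) := by
  rw [uIcc_of_le (by norm_num)]
  intro u ⟨hu₁, hu₂⟩
  rcases hu₁.eq_or_lt with rfl | hu₁
  · norm_num [phiaMajorant]
  · simp only [phiaMajorant, if_neg hu₁.not_ge, if_pos hu₂]

theorem phiaMajorant_eqOn_Ioi_two : EqOn phiaMajorant (fun u => 2 * u ^ (-2 : ℝ)) (Ioi 2) := by
  intro u (hu : 2 < u)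
  change _ = 2 * u ^ (-2 : ℝ)
  rw [phiaMajorant, if_neg (by linarith), if_neg hu.not_ge, rpow_neg (by linarith), rpow_two,
    div_eq_mul_inv]

theorem integrableOn_phiaMajorant_Ioi_two : IntegrableOn phiaMajorant (Ioi 2) :=
  IntegrableOn.congr_fun ((integrableOn_Ioi_rpow_of_lt (by norm_num) (by norm_num)).const_mul 2)
    phiaMajorant_eqOn_Ioi_two.symm measurableSet_Ioi

theorem integral_phiaMajorant_Ioi_two : ∫ u in Ioi 2, phiaMajorant u = 1 := by
  rw [setIntegral_congr_fun measurableSet_Ioi phiaMajorant_eqOn_Ioi_two, integral_const_mul,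
    integral_Ioi_rpow_of_lt (by norm_num) (by norm_num)]
  norm_num

theorem integral_phiaMajorant_Ioi_zero : ∫ u in Ioi 0, phiaMajorant u = 2 + log 3 := by
  have hlow : IntervalIntegrable phiaMajorant volume 0 (2 / 3) :=
    (continuousOn_const.congr phiaMajorant_eqOn_uIcc_zero).intervalIntegrable
  have hmid : IntervalIntegrable phiaMajorant volume (2 / 3) 2 := by
    refine ContinuousOn.intervalIntegrable
      (continuousOn_inv₀.mono ?_ |>.congr phiaMajorant_eqOn_uIcc_two_thirds)
    rw [uIcc_of_le (by norm_num)]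
    exact fun u hu => ne_of_gt (by linarith [hu.1])
  have htail : IntegrableOn phiaMajorant (Ioi (2 / 3)) := by
    rw [← Ioc_union_Ioi_eq_Ioi (by norm_num : (2 / 3 : ℝ) ≤ 2)]
    exact ((intervalIntegrable_iff_integrableOn_Ioc_of_le (by norm_num)).1 hmid).union
      integrableOn_phiaMajorant_Ioi_two
  rw [← intervalIntegral.integral_interval_add_Ioi' hlow htail,
    ← intervalIntegral.integral_interval_add_Ioi' hmid integrableOn_phiaMajorant_Ioi_two,
    integral_phiaMajorant_Ioi_two, intervalIntegral.integral_congr phiaMajorant_eqOn_uIcc_zero,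
    intervalIntegral.integral_congr phiaMajorant_eqOn_uIcc_two_thirds,
    integral_inv_of_pos (by norm_num) (by norm_num), intervalIntegral.integral_const]
  norm_num
  ring

theorem integral_phiaMajorant_abs : ∫ t, phiaMajorant |t| = 2 * (2 + log 3) := by
  rw [integral_comp_abs, integral_phiaMajorant_Ioi_zero]

theorem integrable_phiaMajorant_abs : Integrable fun t => phiaMajorant |t| :=
  Integrable.of_integral_ne_zero (by rw [integral_phiaMajorant_abs]; positivity)

theorem two_mul_two_add_log_three_div_pi_le :
    2 * (2 + log 3) / π ≤ (2 : ℝ) ^ ((3 : ℝ) / 2) * (3 : ℝ) ^ (-(1 : ℝ) / 4) := by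
  have hlow : 2 * (2 + log 3) / π ≤ 21 / 10 := by
    rw [div_le_iff₀ pi_pos]
    linarith [log_three_lt_d9, pi_gt_d2]
  have hpow : (21 / 10 : ℝ) ^ 4 ≤ ((2 : ℝ) ^ ((3 : ℝ) / 2) * (3 : ℝ) ^ (-(1 : ℝ) / 4)) ^ 4 := by
    rw [mul_pow, ← rpow_mul_natCast (by norm_num), ← rpow_mul_natCast (by norm_num)]
    norm_num
  exact hlow.trans (le_of_pow_le_pow_left₀ four_ne_zero (by positivity) hpow)

theorem eLpNorm_one_phiaMajorant_abs_div_pi :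
    eLpNorm (fun t => phiaMajorant |t| / π) 1 volume = ENNReal.ofReal (2 * (2 + log 3) / π) := by
  rw [eLpNorm_one_eq_lintegral_enorm,
    ← ofReal_integral_norm_eq_lintegral_enorm (integrable_phiaMajorant_abs.div_const π)]
  simp_rw [norm_of_nonneg (div_nonneg (phiaMajorant_nonneg _) pi_pos.le)]
  rw [integral_div, integral_phiaMajorant_abs]

/-- `‖φ_a‖₁ ≤ 2^{3/2}·3^{-1/4}`, uniformly in `a`. -/
theorem stmt4 (a : ℝ) (ha : 0 < a) :
    eLpNorm (phia a) 1 volume ≤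
      ENNReal.ofReal ((2 : ℝ) ^ ((3 : ℝ) / 2) * (3 : ℝ) ^ (-(1 : ℝ) / 4)) :=
  calc eLpNorm (phia a) 1 volume = eLpNorm (phia 1) 1 volume := by
        rw [phia_eq_smul_comp_mul a]
        exact eLpNorm_one_smul_comp_mul_left _ ha.ne'
    _ ≤ eLpNorm (fun t => phiaMajorant |t| / π) 1 volume := eLpNorm_mono_real abs_phia_one_le
    _ = ENNReal.ofReal (2 * (2 + log 3) / π) := eLpNorm_one_phiaMajorant_abs_div_pi
    _ ≤ _ := ENNReal.ofReal_le_ofReal two_mul_two_add_log_three_div_pi_le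
end

section
/- Let H = L²(ℝ), v ∈ L²(ℝ), V the operator (Vx)(t) = v(t)x(−t), and h ∈ L¹(ℝ) ∩ L²(ℝ). Define the operator K on H by (Kx)(s) = ∫_ℝ h(t)v(s−t)x(−s+2t)dt. Then K is Hilbert–Schmidt with ‖K‖₂² = (1/2)‖h‖₂²‖v‖₂². -/
/-!
The substitution `u = -s + 2t` turns `K` into the integral operator with kernel
`k(s, u) = h((s + u) / 2) v((s - u) / 2) / 2`. Thus `|k|² = G ∘ T` with
`G(a, b) = |h a|² |v b|² / 4` and `T(s, u) = ((s + u) / 2, (s - u) / 2)`. Since `|det T| = 1/2`,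
the change of variables gives `‖k‖₂² = 2 ∫ G = ‖h‖₂² ‖v‖₂² / 2`, by Fubini.
-/

open MeasureTheory

section LinearChangeOfVariables

variable {E F : Type*} [NormedAddCommGroup E] [NormedSpace ℝ E] [MeasurableSpace E] [BorelSpace E]
  [FiniteDimensional ℝ E] [NormedAddCommGroup F]
  (μ : Measure E) [μ.IsAddHaarMeasure] {f : E →ₗ[ℝ] E}

theorem LinearMap.measurableEmbedding_of_det_ne_zero (hf : LinearMap.det f ≠ 0) :
    MeasurableEmbedding f :=
  (f.equivOfDetNeZero hf).toContinuousLinearEquiv.toHomeomorph.measurableEmbedding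

theorem integrable_comp_linearMap_iff (hf : LinearMap.det f ≠ 0) {g : E → F} :
    Integrable (g ∘ f) μ ↔ Integrable g μ := by
  rw [← (LinearMap.measurableEmbedding_of_det_ne_zero hf).integrable_map_iff,
    Measure.map_linearMap_addHaar_eq_smul_addHaar μ hf,
    integrable_smul_measure (by simpa using hf) ENNReal.ofReal_ne_top]

theorem integral_comp_linearMap [NormedSpace ℝ F] (hf : LinearMap.det f ≠ 0) (g : E → F) :
    ∫ x, g (f x) ∂μ = |(LinearMap.det f)⁻¹| • ∫ x, g x ∂μ := by
  rw [← (LinearMap.measurableEmbedding_of_det_ne_zero hf).integral_map,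
    Measure.map_linearMap_addHaar_eq_smul_addHaar μ hf, integral_smul_measure,
    ENNReal.toReal_ofReal (abs_nonneg _)]

end LinearChangeOfVariables

theorem integral_comp_add_div_two {F : Type*} [NormedAddCommGroup F] [NormedSpace ℝ F]
    (g : ℝ → F) (s : ℝ) : ∫ u, g ((s + u) / 2) = (2 : ℝ) • ∫ t, g t := by
  simp_rw [add_comm s]
  rw [integral_add_right_eq_self (fun u => g (u / 2)) s, Measure.integral_comp_div, abs_two]

noncomputable def halfSumDiff : (ℝ × ℝ) →ₗ[ℝ] ℝ × ℝ where
  toFun p := ((p.1 + p.2) / 2, (p.1 - p.2) / 2)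
  map_add' p q := by ext <;> simp only [Prod.fst_add, Prod.snd_add] <;> ring
  map_smul' c p := by ext <;> simp only [Prod.smul_fst, Prod.smul_snd, smul_eq_mul,
    RingHom.id_apply] <;> ring

theorem det_halfSumDiff : LinearMap.det halfSumDiff = -(1 / 2) := by
  rw [← LinearMap.det_toMatrix (Module.Basis.finTwoProd ℝ), Matrix.det_fin_two]
  simp [LinearMap.toMatrix_apply, halfSumDiff]
  norm_num

theorem integral_comp_neg_add_two_mul_eq_kernel (h v x : ℝ → ℂ) (s : ℝ) :
    ∫ t, h t * v (s - t) * x (-s + 2 * t) =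
      ∫ u, (1 / 2 : ℂ) * h ((s + u) / 2) * v ((s - u) / 2) * x u := by
  set k : ℝ → ℂ := fun t => h t * v (s - t) * x (-s + 2 * t)
  have hk (u : ℝ) : 1 / 2 * h ((s + u) / 2) * v ((s - u) / 2) * x u
      = (1 / 2 : ℂ) * k ((s + u) / 2) := by
    simp only [k]
    ring_nf
  simp_rw [hk]
  rw [integral_const_mul, integral_comp_add_div_two, Complex.real_smul]
  push_cast
  ring

theorem stmt13_general (v h : ℝ → ℂ)
    (hv : MemLp v 2 volume) (hh2 : MemLp h 2 volume) :
    (∀ (x : ℝ → ℂ) (s : ℝ),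
        (∫ t : ℝ, h t * v (s - t) * x (-s + 2 * t)) =
          ∫ u : ℝ, ((1 / 2 : ℂ) * h ((s + u) / 2) * v ((s - u) / 2)) * x u) ∧
      Integrable
        (fun p : ℝ × ℝ => ‖(1 / 2 : ℂ) * h ((p.1 + p.2) / 2) * v ((p.1 - p.2) / 2)‖ ^ 2)
        volume ∧
      (∫ p : ℝ × ℝ, ‖(1 / 2 : ℂ) * h ((p.1 + p.2) / 2) * v ((p.1 - p.2) / 2)‖ ^ 2) =
        (1 / 2) * (∫ t : ℝ, ‖h t‖ ^ 2) * (∫ t : ℝ, ‖v t‖ ^ 2) := by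
  have hdet : LinearMap.det halfSumDiff ≠ 0 := by rw [det_halfSumDiff]; norm_num
  set G : ℝ × ℝ → ℝ := fun q => (1 / 4 * ‖h q.1‖ ^ 2) * ‖v q.2‖ ^ 2
  have hkernel : (fun p : ℝ × ℝ => ‖(1 / 2 : ℂ) * h ((p.1 + p.2) / 2) * v ((p.1 - p.2) / 2)‖ ^ 2)
      = G ∘ halfSumDiff := by
    ext p
    simp [G, halfSumDiff, mul_pow]
    norm_num
  refine ⟨integral_comp_neg_add_two_mul_eq_kernel h v, ?_, ?_⟩
  · rw [hkernel, integrable_comp_linearMap_iff volume hdet, Measure.volume_eq_prod]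
    exact (hh2.norm.integrable_sq.const_mul _).mul_prod hv.norm.integrable_sq
  · rw [hkernel, Function.comp_def, integral_comp_linearMap volume hdet, det_halfSumDiff,
      Measure.volume_eq_prod, integral_prod_mul (fun a => 1 / 4 * ‖h a‖ ^ 2) (fun b => ‖v b‖ ^ 2),
      integral_const_mul]
    norm_num
    ring

/-- Let `v ∈ L²(ℝ)`, `h ∈ L¹ ∩ L²`, and `K` the operator
`(Kx)(s) = ∫ h(t) v(s-t) x(-s+2t) dt` on `L²(ℝ)`. Then `K` is the integral (Hilbert–Schmidt)
operator with kernel `k(s,u) = (1/2) h((s+u)/2) v((s-u)/2)`, whose `L²(ℝ²)` (Hilbert–Schmidt)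
squared norm equals `(1/2)‖h‖₂²‖v‖₂²`. -/
theorem stmt13 (v h : ℝ → ℂ)
    (hv : MemLp v 2 volume) (hh1 : Integrable h volume) (hh2 : MemLp h 2 volume) :
    (∀ (x : ℝ → ℂ) (s : ℝ),
        (∫ t : ℝ, h t * v (s - t) * x (-s + 2 * t)) =
          ∫ u : ℝ, ((1 / 2 : ℂ) * h ((s + u) / 2) * v ((s - u) / 2)) * x u) ∧
      Integrable
        (fun p : ℝ × ℝ => ‖(1 / 2 : ℂ) * h ((p.1 + p.2) / 2) * v ((p.1 - p.2) / 2)‖ ^ 2)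
        volume ∧
      (∫ p : ℝ × ℝ, ‖(1 / 2 : ℂ) * h ((p.1 + p.2) / 2) * v ((p.1 - p.2) / 2)‖ ^ 2) =
        (1 / 2) * (∫ t : ℝ, ‖h t‖ ^ 2) * (∫ t : ℝ, ‖v t‖ ^ 2) :=
  stmt13_general v h hv hh2
end

section
/- Let v ∈ L²(ℝ), h ∈ L¹(ℝ) ∩ L^∞(ℝ), and define on L²(ℝ) the operator (Mx)(s) = ∫_ℝ v(s)h(t)v(−s−t)x(s+2t)dt. Then M is Hilbert–Schmidt and ‖M‖₂² = (1/2)∫∫|v(s)h(t)v(−s−t)|²ds dt ≤ (1/2)‖h‖_∞²‖v‖₂⁴. -/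
/-!
The substitution `u = s + 2t` turns `M` into the integral operator with kernel
`k(s, u) = ½ v(s) h((u - s)/2) v((-s - u)/2)`. The shear `(s, t) ↦ (s, s + 2t)` scales Lebesgue
measure on `ℝ²` by `2`, so `∫∫ |k|² = ½ ∫∫ |v(s) h(t) v(-s-t)|²`. Bounding `|h|` by `‖h‖_∞`, the
measure-preserving map `(s, t) ↦ (s, -s - t)` factors what remains as `‖v‖₂² · ‖v‖₂²`.
-/

open MeasureTheory
open scoped ENNReal

lemma Real.map_volume_add_mul (s : ℝ) {c : ℝ} (hc : c ≠ 0) :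
    Measure.map (fun t : ℝ => s + c * t) volume = ENNReal.ofReal |c⁻¹| • volume := by
  have : (fun t : ℝ => s + c * t) = (s + ·) ∘ (c * ·) := rfl
  rw [this, ← Measure.map_map (by fun_prop) (by fun_prop), Real.map_volume_mul_left hc,
    Measure.map_smul, map_add_left_eq_self]

lemma integral_comp_add_mul {E : Type*} [NormedAddCommGroup E] [NormedSpace ℝ E]
    (F : ℝ → E) (s c : ℝ) : ∫ t, F (s + c * t) = |c⁻¹| • ∫ u, F u := by
  rw [Measure.integral_comp_mul_left (fun u => F (s + u)) c, integral_add_left_eq_self]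

noncomputable def shearMul {c : ℝ} (hc : c ≠ 0) : ℝ × ℝ ≃ᵐ ℝ × ℝ where
  toFun p := (p.1, p.1 + c * p.2)
  invFun p := (p.1, (p.2 - p.1) / c)
  left_inv p := by simp [hc]
  right_inv p := by simp [mul_div_cancel₀ _ hc]
  measurable_toFun := measurable_fst.prodMk (by fun_prop)
  measurable_invFun := measurable_fst.prodMk (by fun_prop)

lemma shearMul_apply {c : ℝ} (hc : c ≠ 0) (p : ℝ × ℝ) : shearMul hc p = (p.1, p.1 + c * p.2) := rfl

lemma measurePreserving_shearMul {c : ℝ} (hc : c ≠ 0) :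
    MeasurePreserving (shearMul hc) volume (ENNReal.ofReal |c⁻¹| • volume) := by
  have := (MeasurePreserving.id (volume : Measure ℝ)).skew_product (g := fun s t => s + c * t)
    (by fun_prop) (ae_of_all _ fun s => Real.map_volume_add_mul s hc)
  rwa [Measure.prod_smul_right] at this

section Shear

variable {E : Type*} [NormedAddCommGroup E] {c : ℝ}

lemma integrable_comp_shearMul_iff (hc : c ≠ 0) {g : ℝ × ℝ → E} :
    Integrable (g ∘ shearMul hc) ↔ Integrable g := by
  rw [(measurePreserving_shearMul hc).integrable_comp_emb (shearMul hc).measurableEmbedding,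
    integrable_smul_measure (by simpa using hc) ENNReal.ofReal_ne_top]

lemma integral_comp_shearMul [NormedSpace ℝ E] (hc : c ≠ 0) (g : ℝ × ℝ → E) :
    ∫ p, g (shearMul hc p) = |c⁻¹| • ∫ p, g p := by
  rw [(measurePreserving_shearMul hc).integral_comp', integral_smul_measure,
    ENNReal.toReal_ofReal (abs_nonneg _)]

end Shear

lemma measurePreserving_prod_neg_sub :
    MeasurePreserving (fun p : ℝ × ℝ => (p.1, -p.1 - p.2)) volume volume :=
  (MeasurePreserving.id (volume : Measure ℝ)).skew_product (g := fun s t => -s - t)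
    (by fun_prop) (ae_of_all _ fun s => Measure.map_sub_left_eq_self volume (-s))

section NegSub

variable {𝕜 : Type*} [RCLike 𝕜] {f g : ℝ → 𝕜}

lemma MeasureTheory.Integrable.mul_comp_neg_sub (hf : Integrable f) (hg : Integrable g) :
    Integrable (fun q : ℝ × ℝ => f q.1 * g (-q.1 - q.2)) :=
  (measurePreserving_prod_neg_sub.integrable_comp (hf.mul_prod hg).aestronglyMeasurable).2
    (hf.mul_prod hg)

lemma integral_mul_comp_neg_sub (hf : Integrable f) (hg : Integrable g) :
    ∫ q : ℝ × ℝ, f q.1 * g (-q.1 - q.2) = (∫ t, f t) * ∫ t, g t := by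
  have hψ := measurePreserving_prod_neg_sub
  have hF : AEStronglyMeasurable (fun z : ℝ × ℝ => f z.1 * g z.2)
      (volume.map fun p : ℝ × ℝ => (p.1, -p.1 - p.2)) := by
    rw [hψ.map_eq]; exact (hf.mul_prod hg).aestronglyMeasurable
  rw [← integral_prod_mul f g, ← integral_map hψ.aemeasurable hF, hψ.map_eq]
  rfl

end NegSub

noncomputable def integralKernel (v h : ℝ → ℂ) (p : ℝ × ℝ) : ℂ :=
  (1 / 2 : ℂ) * v p.1 * h ((p.2 - p.1) / 2) * v ((-p.1 - p.2) / 2)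

def shearedKernel (v h : ℝ → ℂ) (q : ℝ × ℝ) : ℂ := v q.1 * h q.2 * v (-q.1 - q.2)

lemma integral_eq_integral_integralKernel_mul (v h x : ℝ → ℂ) (s : ℝ) :
    ∫ t, v s * h t * v (-s - t) * x (s + 2 * t) = ∫ u, integralKernel v h (s, u) * x u := by
  set F : ℝ → ℂ := fun u => v s * h ((u - s) / 2) * v ((-s - u) / 2) * x u
  have hF : ∀ t, v s * h t * v (-s - t) * x (s + 2 * t) = F (s + 2 * t) := fun t => by
    simp only [F]; ring_nf
  calc ∫ t, v s * h t * v (-s - t) * x (s + 2 * t) = |(2 : ℝ)⁻¹| • ∫ u, F u := by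
        simp_rw [hF]; exact integral_comp_add_mul F s 2
    _ = ∫ u, integralKernel v h (s, u) * x u := by
        rw [← integral_smul]; congr 1 with u
        simp only [F, integralKernel, Complex.real_smul]; norm_num; ring

section Kernel

variable {v h : ℝ → ℂ}

lemma integralKernel_shearMul (p : ℝ × ℝ) :
    integralKernel v h (shearMul two_ne_zero p) = 2⁻¹ * shearedKernel v h p := by
  simp only [integralKernel, shearedKernel, shearMul_apply]
  ring_nf

lemma integral_norm_sq_integralKernel :
    ∫ p, ‖integralKernel v h p‖ ^ 2 = 1 / 2 * ∫ q, ‖shearedKernel v h q‖ ^ 2 := by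
  have := integral_comp_shearMul two_ne_zero fun p => ‖integralKernel v h p‖ ^ 2
  simp only [integralKernel_shearMul, norm_mul, mul_pow, integral_const_mul, smul_eq_mul] at this
  norm_num at this
  linarith

lemma ae_norm_sq_shearedKernel_le (hh : MemLp h ∞) :
    ∀ᵐ q : ℝ × ℝ, ‖shearedKernel v h q‖ ^ 2 ≤
      (eLpNorm h ∞ volume).toReal ^ 2 * (‖v q.1‖ ^ 2 * ‖v (-q.1 - q.2)‖ ^ 2) := by
  filter_upwards [Measure.quasiMeasurePreserving_snd.ae (ae_le_lpNorm_exponent_top hh)] with q hq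
  rw [toReal_eLpNorm hh.aestronglyMeasurable]
  have : ‖h q.2‖ ^ 2 ≤ lpNorm h ∞ volume ^ 2 := pow_le_pow_left₀ (norm_nonneg _) hq 2
  calc ‖shearedKernel v h q‖ ^ 2 = ‖h q.2‖ ^ 2 * (‖v q.1‖ ^ 2 * ‖v (-q.1 - q.2)‖ ^ 2) := by
        simp only [shearedKernel, norm_mul, mul_pow]; ring
    _ ≤ _ := by gcongr

lemma MeasureTheory.AEStronglyMeasurable.shearedKernel (hv : AEStronglyMeasurable v)
    (hh : AEStronglyMeasurable h) :
    AEStronglyMeasurable (shearedKernel v h) := by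
  have hneg : Measure.QuasiMeasurePreserving (fun q : ℝ × ℝ => -q.1 - q.2) :=
    Measure.quasiMeasurePreserving_snd.comp measurePreserving_prod_neg_sub.quasiMeasurePreserving
  exact ((hv.comp_quasiMeasurePreserving Measure.quasiMeasurePreserving_fst).mul
    (hh.comp_quasiMeasurePreserving Measure.quasiMeasurePreserving_snd)).mul
    (hv.comp_quasiMeasurePreserving hneg)

lemma integrable_norm_sq_shearedKernel (hv : MemLp v 2) (hh : MemLp h ∞) :
    Integrable fun q => ‖shearedKernel v h q‖ ^ 2 := by
  have hv2 : Integrable fun t => ‖v t‖ ^ 2 := hv.integrable_norm_pow two_ne_zero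
  refine ((hv2.mul_comp_neg_sub hv2).const_mul ((eLpNorm h ∞ volume).toReal ^ 2)).mono'
    ((hv.aestronglyMeasurable.shearedKernel hh.aestronglyMeasurable).norm.pow 2) ?_
  filter_upwards [ae_norm_sq_shearedKernel_le hh] with q hq
  rwa [Real.norm_of_nonneg (by positivity)]

lemma integral_norm_sq_shearedKernel_le (hv : MemLp v 2) (hh : MemLp h ∞) :
    ∫ q, ‖shearedKernel v h q‖ ^ 2 ≤ (eLpNorm h ∞ volume).toReal ^ 2 * (∫ t, ‖v t‖ ^ 2) ^ 2 := by
  have hv2 : Integrable fun t => ‖v t‖ ^ 2 := hv.integrable_norm_pow two_ne_zero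
  calc ∫ q, ‖shearedKernel v h q‖ ^ 2
      ≤ ∫ q : ℝ × ℝ, (eLpNorm h ∞ volume).toReal ^ 2 * (‖v q.1‖ ^ 2 * ‖v (-q.1 - q.2)‖ ^ 2) :=
        integral_mono_ae (integrable_norm_sq_shearedKernel hv hh)
          ((hv2.mul_comp_neg_sub hv2).const_mul _) (ae_norm_sq_shearedKernel_le hh)
    _ = _ := by rw [integral_const_mul, integral_mul_comp_neg_sub hv2 hv2, sq (∫ t, _)]

end Kernel

theorem stmt14_general (v h : ℝ → ℂ)
    (hv : MemLp v 2 volume) (hhinf : MemLp h ⊤ volume) :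
    (∀ (x : ℝ → ℂ) (s : ℝ),
        (∫ t : ℝ, v s * h t * v (-s - t) * x (s + 2 * t)) =
          ∫ u : ℝ, ((1 / 2 : ℂ) * v s * h ((u - s) / 2) * v ((-s - u) / 2)) * x u) ∧
      Integrable
        (fun p : ℝ × ℝ =>
          ‖(1 / 2 : ℂ) * v p.1 * h ((p.2 - p.1) / 2) * v ((-p.1 - p.2) / 2)‖ ^ 2) volume ∧
      (∫ p : ℝ × ℝ,
          ‖(1 / 2 : ℂ) * v p.1 * h ((p.2 - p.1) / 2) * v ((-p.1 - p.2) / 2)‖ ^ 2) =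
        (1 / 2) * ∫ q : ℝ × ℝ, ‖v q.1 * h q.2 * v (-q.1 - q.2)‖ ^ 2 ∧
      (1 / 2) * (∫ q : ℝ × ℝ, ‖v q.1 * h q.2 * v (-q.1 - q.2)‖ ^ 2) ≤
        (1 / 2) * (eLpNorm h ⊤ volume).toReal ^ 2 * (∫ t : ℝ, ‖v t‖ ^ 2) ^ 2 := by
  have hK : Integrable fun p => ‖integralKernel v h p‖ ^ 2 := by
    rw [← integrable_comp_shearMul_iff two_ne_zero]
    simp only [Function.comp_def, integralKernel_shearMul, norm_mul, mul_pow]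
    exact (integrable_norm_sq_shearedKernel hv hhinf).const_mul _
  refine ⟨integral_eq_integral_integralKernel_mul v h, hK, integral_norm_sq_integralKernel, ?_⟩
  rw [mul_assoc]
  gcongr
  exact integral_norm_sq_shearedKernel_le hv hhinf

/-- Let `v ∈ L²(ℝ)`, `h ∈ L¹ ∩ L^∞`, and `M` the operator
`(Mx)(s) = ∫ v(s) h(t) v(-s-t) x(s+2t) dt` on `L²(ℝ)`. Then `M` is the integral
(Hilbert–Schmidt) operator with kernel `k(s,u) = (1/2) v(s) h((u-s)/2) v((-s-u)/2)`, and
`‖M‖₂² = (1/2)∫∫ |v(s)h(t)v(-s-t)|² ds dt ≤ (1/2)‖h‖_∞² ‖v‖₂⁴`. -/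
theorem stmt14 (v h : ℝ → ℂ)
    (hv : MemLp v 2 volume) (hh1 : Integrable h volume) (hhinf : MemLp h ⊤ volume) :
    (∀ (x : ℝ → ℂ) (s : ℝ),
        (∫ t : ℝ, v s * h t * v (-s - t) * x (s + 2 * t)) =
          ∫ u : ℝ, ((1 / 2 : ℂ) * v s * h ((u - s) / 2) * v ((-s - u) / 2)) * x u) ∧
      Integrable
        (fun p : ℝ × ℝ =>
          ‖(1 / 2 : ℂ) * v p.1 * h ((p.2 - p.1) / 2) * v ((-p.1 - p.2) / 2)‖ ^ 2) volume ∧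
      (∫ p : ℝ × ℝ,
          ‖(1 / 2 : ℂ) * v p.1 * h ((p.2 - p.1) / 2) * v ((-p.1 - p.2) / 2)‖ ^ 2) =
        (1 / 2) * ∫ q : ℝ × ℝ, ‖v q.1 * h q.2 * v (-q.1 - q.2)‖ ^ 2 ∧
      (1 / 2) * (∫ q : ℝ × ℝ, ‖v q.1 * h q.2 * v (-q.1 - q.2)‖ ^ 2) ≤
        (1 / 2) * (eLpNorm h ⊤ volume).toReal ^ 2 * (∫ t : ℝ, ‖v t‖ ^ 2) ^ 2 :=
  stmt14_general v h hv hhinf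
end
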